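/- arXiv:1306.1710 — 2 statements merged into one kernel-verified Lean document; each statement's English description precedes it below -/
import Mathlib

section
/- Let μ and ν be two probability measures supported in a bounded interval K of length |K|. Then the 1-Wasserstein distance satisfies W₁(μ, ν) ≤ max(1, |K|/2) · ρ_F(μ, ν), where ρ_F is the flat metric. -/
open MeasureTheory

noncomputable def flatDist (μ ν : Measure ℝ) : ℝ :=
  sSup {r : ℝ | ∃ φ : ℝ → ℝ, LipschitzWith 1 φ ∧ (∀ x, |φ x| ≤ 1) ∧
    r = ∫ x, φ x ∂μ - ∫ x, φ x ∂ν}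

/-- The 1-Wasserstein distance via Kantorovich–Rubinstein duality. -/
noncomputable def W1 (μ ν : Measure ℝ) : ℝ :=
  sSup {r : ℝ | ∃ φ : ℝ → ℝ, LipschitzWith 1 φ ∧
    r = ∫ x, φ x ∂μ - ∫ x, φ x ∂ν}

/-!
A 1-Lipschitz test function `φ` of `W1` varies by at most `|K|/2` on `K = [k₁, k₂]`, so
`φ - φ m`, with `m` the midpoint of `K`, is bounded by `c = max 1 (|K|/2)` on `K`. Since `μ` and
`ν` have the same mass and live on `K`, subtracting `φ m` does not change `∫ φ d(μ - ν)`, and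
`(φ - φ m) / c`, clamped to `[-1, 1]` off `K`, is an admissible test function of `flatDist`.
-/

section FlatDist

variable (μ ν : Measure ℝ)

theorem flatDist_set_bddAbove [IsFiniteMeasure μ] [IsFiniteMeasure ν] :
    BddAbove {r : ℝ | ∃ φ : ℝ → ℝ, LipschitzWith 1 φ ∧ (∀ x, |φ x| ≤ 1) ∧
      r = ∫ x, φ x ∂μ - ∫ x, φ x ∂ν} := by
  refine ⟨μ.real Set.univ + ν.real Set.univ, ?_⟩
  rintro _ ⟨φ, -, hφ, rfl⟩
  have hbound (ρ : Measure ℝ) [IsFiniteMeasure ρ] : |∫ x, φ x ∂ρ| ≤ ρ.real Set.univ := by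
    simpa using norm_integral_le_of_norm_le_const (μ := ρ) (C := 1)
      (.of_forall fun x => (Real.norm_eq_abs _).trans_le (hφ x))
  linarith [abs_le.1 (hbound μ), abs_le.1 (hbound ν)]

variable {μ ν} [IsFiniteMeasure μ] [IsFiniteMeasure ν]

theorem integral_sub_integral_le_flatDist {ψ : ℝ → ℝ} (hψ : LipschitzWith 1 ψ)
    (hψ_le : ∀ x, |ψ x| ≤ 1) : ∫ x, ψ x ∂μ - ∫ x, ψ x ∂ν ≤ flatDist μ ν :=
  le_csSup (flatDist_set_bddAbove μ ν) ⟨ψ, hψ, hψ_le, rfl⟩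

theorem flatDist_nonneg : 0 ≤ flatDist μ ν := by
  simpa using integral_sub_integral_le_flatDist (μ := μ) (ν := ν)
    (LipschitzWith.const' (0 : ℝ)) (by simp)

end FlatDist

theorem LipschitzWith.sub_const_div {φ : ℝ → ℝ} (hφ : LipschitzWith 1 φ) (a : ℝ) {c : ℝ}
    (hc : 1 ≤ c) : LipschitzWith 1 fun x => (φ x - a) / c := by
  refine LipschitzWith.of_dist_le_mul fun x y => ?_
  have hφxy : |φ x - φ y| ≤ |x - y| := by simpa [Real.dist_eq] using hφ.dist_le_mul x y
  rw [Real.dist_eq, Real.dist_eq, NNReal.coe_one, one_mul, div_sub_div_same,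
    sub_sub_sub_cancel_right, abs_div, abs_of_pos (zero_lt_one.trans_le hc)]
  exact (div_le_self (abs_nonneg _) hc).trans hφxy

theorem abs_sub_midpoint_le_of_mem_Icc {a b x : ℝ} (hx : x ∈ Set.Icc a b) :
    |x - (a + b) / 2| ≤ (b - a) / 2 := by
  obtain ⟨hax, hxb⟩ := hx
  rw [abs_le]
  constructor <;> linarith

theorem integral_sub_integral_sub_const_div {μ ν : Measure ℝ} [IsProbabilityMeasure μ]
    [IsProbabilityMeasure ν] {φ : ℝ → ℝ} (hφμ : Integrable φ μ) (hφν : Integrable φ ν)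
    (a c : ℝ) :
    ∫ x, (φ x - a) / c ∂μ - ∫ x, (φ x - a) / c ∂ν = (∫ x, φ x ∂μ - ∫ x, φ x ∂ν) / c := by
  simp only [integral_div, integral_sub hφμ (integrable_const a),
    integral_sub hφν (integrable_const a), integral_const, probReal_univ, one_smul]
  ring

theorem integral_sub_integral_le_mul_flatDist {μ ν : Measure ℝ} [IsProbabilityMeasure μ]
    [IsProbabilityMeasure ν] {s : Set ℝ} (hμ : ∀ᵐ x ∂μ, x ∈ s) (hν : ∀ᵐ x ∂ν, x ∈ s)
    {φ : ℝ → ℝ} (hφ : LipschitzWith 1 φ) {a c : ℝ} (hc : 1 ≤ c)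
    (hφs : ∀ x ∈ s, |φ x - a| ≤ c) :
    ∫ x, φ x ∂μ - ∫ x, φ x ∂ν ≤ c * flatDist μ ν := by
  set ψ : ℝ → ℝ := fun x => max (-1) (min 1 ((φ x - a) / c))
  have hc₀ : 0 < c := zero_lt_one.trans_le hc
  have hψ : LipschitzWith 1 ψ := ((hφ.sub_const_div a hc).const_min 1).const_max (-1)
  have hψ_le (x : ℝ) : |ψ x| ≤ 1 :=
    abs_le.2 ⟨le_max_left _ _, max_le (by norm_num) (min_le_left _ _)⟩
  have hψ_eq : ∀ x ∈ s, ψ x = (φ x - a) / c := fun x hx => by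
    have hle : |(φ x - a) / c| ≤ 1 := by
      rw [abs_div, abs_of_pos hc₀, div_le_one hc₀]; exact hφs x hx
    obtain ⟨hlo, hhi⟩ := abs_le.1 hle
    simp only [ψ, min_eq_right hhi, max_eq_right hlo]
  have hφ_int {ρ : Measure ℝ} [IsProbabilityMeasure ρ] (hρ : ∀ᵐ x ∂ρ, x ∈ s) :
      Integrable φ ρ :=
    .of_bound hφ.continuous.aestronglyMeasurable (|a| + c) <| hρ.mono fun x hx => by
      have := abs_sub_abs_le_abs_sub (φ x) a
      rw [Real.norm_eq_abs]; linarith [hφs x hx]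
  have hψ_integral {ρ : Measure ℝ} (hρ : ∀ᵐ x ∂ρ, x ∈ s) :
      ∫ x, ψ x ∂ρ = ∫ x, (φ x - a) / c ∂ρ :=
    integral_congr_ae (hρ.mono hψ_eq)
  calc ∫ x, φ x ∂μ - ∫ x, φ x ∂ν
      = c * (∫ x, ψ x ∂μ - ∫ x, ψ x ∂ν) := by
        rw [hψ_integral hμ, hψ_integral hν,
          integral_sub_integral_sub_const_div (hφ_int hμ) (hφ_int hν), mul_div_cancel₀ _ hc₀.ne']
    _ ≤ c * flatDist μ ν := by gcongr; exact integral_sub_integral_le_flatDist hψ hψ_le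

theorem W1_le_flatDist_general (k₁ k₂ : ℝ)
    (μ ν : Measure ℝ) [IsProbabilityMeasure μ] [IsProbabilityMeasure ν]
    (hμ : μ (Set.Icc k₁ k₂)ᶜ = 0) (hν : ν (Set.Icc k₁ k₂)ᶜ = 0) :
    W1 μ ν ≤ max 1 ((k₂ - k₁) / 2) * flatDist μ ν := by
  have hc : (1 : ℝ) ≤ max 1 ((k₂ - k₁) / 2) := le_max_left _ _
  refine Real.sSup_le ?_ (mul_nonneg (zero_le_one.trans hc) flatDist_nonneg)
  rintro _ ⟨φ, hφ, rfl⟩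
  refine integral_sub_integral_le_mul_flatDist (a := φ ((k₁ + k₂) / 2)) (ae_iff.2 hμ) (ae_iff.2 hν)
    hφ hc fun x hx => ?_
  calc |φ x - φ ((k₁ + k₂) / 2)|
      ≤ |x - (k₁ + k₂) / 2| := by simpa [Real.dist_eq] using hφ.dist_le_mul x ((k₁ + k₂) / 2)
    _ ≤ (k₂ - k₁) / 2 := abs_sub_midpoint_le_of_mem_Icc hx
    _ ≤ max 1 ((k₂ - k₁) / 2) := le_max_right _ _

/-- For probability measures supported in a bounded interval K = [k₁, k₂],
W₁(μ, ν) ≤ max(1, |K|/2) · ρ_F(μ, ν). -/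
theorem W1_le_flatDist (k₁ k₂ : ℝ) (hk : k₁ ≤ k₂)
    (μ ν : Measure ℝ) [IsProbabilityMeasure μ] [IsProbabilityMeasure ν]
    (hμ : μ (Set.Icc k₁ k₂)ᶜ = 0) (hν : ν (Set.Icc k₁ k₂)ᶜ = 0) :
    W1 μ ν ≤ max 1 ((k₂ - k₁) / 2) * flatDist μ ν :=
  W1_le_flatDist_general k₁ k₂ μ ν hμ hν
end

section
/- Let μ = Σ_{i=1}^{M} m_i δ_{x_i} be a purely atomic probability measure with support in a compact interval K = [k₁, k₂], and let R_m(μ) = Σ_{j=1}^{M̄} (1/M̄) δ_{x̃_j} be its fixed-equal-mass reconstruction, where x̃_j is the conditional mean of μ on the j-th quantile block of mass 1/M̄ (obtained by scanning the atoms in increasing order and splitting atoms at quantile boundaries). Then W₁(μ, R_m(μ)) ≤ |K|/M̄. -/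
open MeasureTheory

/-- The (generalized inverse) quantile function of a measure on ℝ. -/
noncomputable def quantile (μ : Measure ℝ) (t : ℝ) : ℝ :=
  sInf {x : ℝ | t ≤ (μ (Set.Iic x)).toReal}

/-! The quantile function `G` of `μ` pushes Lebesgue measure on `(0, 1]` forward to `μ`, and the
`j`-th atom of the reconstruction is the mean of `G` over the block `(j / M̄, (j + 1) / M̄]`. On
that block both `G` and this mean lie in `[G (j / M̄), G ((j + 1) / M̄)]`, so against a 1-Lipschitz
test function the block contributes at most `(G ((j + 1) / M̄) - G (j / M̄)) / M̄`, and these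
increments of the monotone `G` telescope to at most `(k₂ - k₁) / M̄`. -/

open Set ProbabilityTheory

lemma W1_le_of_forall_lipschitz {μ ν : Measure ℝ} {C : ℝ} (hC : 0 ≤ C)
    (h : ∀ φ : ℝ → ℝ, LipschitzWith 1 φ → ∫ x, φ x ∂μ - ∫ x, φ x ∂ν ≤ C) : W1 μ ν ≤ C :=
  Real.sSup_le (by rintro r ⟨φ, hφ, rfl⟩; exact h φ hφ) hC

lemma integral_sum_smul_dirac {α ι : Type*} [MeasurableSpace α] [MeasurableSingletonClass α]
    (s : Finset ι) {w : ι → ENNReal} (hw : ∀ i ∈ s, w i ≠ ⊤) (y : ι → α) (f : α → ℝ) :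
    ∫ z, f z ∂(∑ i ∈ s, w i • Measure.dirac (y i)) = ∑ i ∈ s, (w i).toReal * f (y i) := by
  rw [integral_finsetSum_measure fun i hi =>
    (integrable_dirac ENNReal.coe_lt_top).smul_measure (hw i hi)]
  simp only [integral_smul_measure, integral_dirac, smul_eq_mul]

section Lipschitz

variable {α : Type*} [MeasurableSpace α] {ν : Measure α} [IsFiniteMeasure ν]
  {φ : ℝ → ℝ} {g : α → ℝ} {a b : ℝ}

lemma LipschitzWith.integrable_comp_of_ae_mem_Icc {K : NNReal} (hφ : LipschitzWith K φ)
    (hg : AEStronglyMeasurable g ν) (hga : ∀ᵐ x ∂ν, g x ∈ Icc a b) :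
    Integrable (fun x => φ (g x)) ν := by
  refine Integrable.of_bound (hφ.continuous.comp_aestronglyMeasurable hg) (‖φ a‖ + K * (b - a)) ?_
  filter_upwards [hga] with x hx
  have hdist : dist (g x) a ≤ b - a := by
    rw [Real.dist_eq, abs_of_nonneg (sub_nonneg.2 hx.1)]; linarith [hx.2]
  calc ‖φ (g x)‖ ≤ ‖φ a‖ + ‖φ (g x) - φ a‖ := norm_le_norm_add_norm_sub' _ _
    _ ≤ ‖φ a‖ + K * (b - a) := by
      rw [← dist_eq_norm]; gcongr; exact (hφ.dist_le_mul _ _).trans (by gcongr)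

lemma LipschitzWith.integral_comp_sub_le (hφ : LipschitzWith 1 φ)
    (hg : AEStronglyMeasurable g ν) (hga : ∀ᵐ x ∂ν, g x ∈ Icc a b) {c : ℝ} (hc : c ∈ Icc a b) :
    ∫ x, φ (g x) ∂ν - ν.real univ * φ c ≤ ν.real univ * (b - a) := by
  have hpt : ∀ᵐ x ∂ν, φ (g x) - φ c ≤ b - a := by
    filter_upwards [hga] with x hx
    have h := hφ.dist_le_mul (g x) c
    rw [Real.dist_eq, Real.dist_eq, NNReal.coe_one, one_mul] at h
    have hgc : |g x - c| ≤ b - a :=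
      abs_sub_le_iff.2 ⟨by linarith [hx.2, hc.1], by linarith [hx.1, hc.2]⟩
    linarith [le_abs_self (φ (g x) - φ c)]
  calc ∫ x, φ (g x) ∂ν - ν.real univ * φ c = ∫ x, (φ (g x) - φ c) ∂ν := by
        rw [integral_sub (hφ.integrable_comp_of_ae_mem_Icc hg hga) (integrable_const _),
          integral_const, smul_eq_mul]
    _ ≤ ∫ _, (b - a) ∂ν := integral_mono_ae
        ((hφ.integrable_comp_of_ae_mem_Icc hg hga).sub (integrable_const _))
        (integrable_const _) hpt
    _ = ν.real univ * (b - a) := by rw [integral_const, smul_eq_mul]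

end Lipschitz

lemma Monotone.setIntegral_lipschitz_comp_sub_le {G φ : ℝ → ℝ} (hG : Monotone G)
    (hφ : LipschitzWith 1 φ) {a b : ℝ} (hab : a < b) :
    (∫ t in Ioc a b, φ (G t)) - (b - a) * φ (⨍ t in Ioc a b, G t) ≤ (b - a) * (G b - G a) := by
  have hGab : ∀ᵐ t ∂volume.restrict (Ioc a b), G t ∈ Icc (G a) (G b) :=
    ae_restrict_of_forall_mem measurableSet_Ioc fun t ht => ⟨hG ht.1.le, hG ht.2⟩
  have havg : ⨍ t in Ioc a b, G t ∈ Icc (G a) (G b) :=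
    (convex_Icc _ _).set_average_mem isClosed_Icc (by simp [hab]) (by simp) hGab
      (hG.intervalIntegrable (a := a) (b := b)).1
  have h := hφ.integral_comp_sub_le (ν := volume.restrict (Ioc a b))
    hG.measurable.aestronglyMeasurable hGab havg
  rw [measureReal_restrict_apply_univ, Real.volume_real_Ioc_of_le hab.le] at h
  exact h

lemma setIntegral_Ioc_zero_one_eq_sum {f : ℝ → ℝ} (hf : IntegrableOn f (Ioc 0 1)) {n : ℕ}
    (hn : 0 < n) :
    (∫ t in Ioc 0 1, f t) = ∑ j ∈ Finset.range n, ∫ t in Ioc ((j : ℝ) / n) ((j + 1) / n), f t := by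
  have hn' : (0 : ℝ) < n := by exact_mod_cast hn
  have hf' : IntervalIntegrable f volume 0 1 :=
    (intervalIntegrable_iff_integrableOn_Ioc_of_le zero_le_one).2 hf
  have hnode : ∀ k ≤ n, (k : ℝ) / n ∈ uIcc 0 1 := fun k hk => by
    rw [uIcc_of_le zero_le_one]
    exact ⟨by positivity, (div_le_one hn').2 (by exact_mod_cast hk)⟩
  have hsum := intervalIntegral.sum_integral_adjacent_intervals (μ := volume)
    (a := fun k : ℕ => (k : ℝ) / n) fun k hk =>
      hf'.mono_set (uIcc_subset_uIcc (hnode k hk.le) (hnode (k + 1) hk))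
  simp only [Nat.cast_zero, zero_div, Nat.cast_add, Nat.cast_one, div_self hn'.ne'] at hsum
  rw [← intervalIntegral.integral_of_le zero_le_one, ← hsum]
  exact Finset.sum_congr rfl fun k _ => intervalIntegral.integral_of_le (by gcongr; linarith)

lemma quantile_eq_sInf_cdf (μ : Measure ℝ) [IsProbabilityMeasure μ] (t : ℝ) :
    quantile μ t = sInf {x | t ≤ cdf μ x} := by
  simp only [quantile, cdf_eq_real, measureReal_def]

section Quantile

variable {μ : Measure ℝ} [IsProbabilityMeasure μ] {k₁ k₂ : ℝ}

lemma cdf_eq_zero_of_lt_of_measure_compl_Icc (hμ : μ (Icc k₁ k₂)ᶜ = 0) {x : ℝ} (hx : x < k₁) :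
    cdf μ x = 0 := by
  rw [cdf_eq_real, measureReal_eq_zero_iff]
  refine measure_mono_null ?_ hμ
  intro y (hy : y ≤ x) (hy' : y ∈ Icc k₁ k₂)
  exact (not_le.2 hx) (hy'.1.trans hy)

lemma cdf_eq_one_of_measure_compl_Icc (hμ : μ (Icc k₁ k₂)ᶜ = 0) : cdf μ k₂ = 1 := by
  have h : μ (Iic k₂)ᶜ = 0 :=
    measure_mono_null (compl_subset_compl.2 fun _ hy => hy.2) hμ
  rw [cdf_eq_real, measureReal_def, (prob_compl_eq_zero_iff measurableSet_Iic).1 h,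
    ENNReal.toReal_one]

/-- Right continuity of `cdf μ` puts `quantile μ t` itself into `{x | t ≤ cdf μ x}`. -/
lemma quantile_le_iff (hμ : μ (Icc k₁ k₂)ᶜ = 0) {t x : ℝ} (ht : 0 < t) (ht1 : t ≤ 1) :
    quantile μ t ≤ x ↔ t ≤ cdf μ x := by
  rw [quantile_eq_sInf_cdf]
  set S := {x | t ≤ cdf μ x}
  have hk₂ : k₂ ∈ S := by simp only [S, mem_ofPred_eq, cdf_eq_one_of_measure_compl_Icc hμ, ht1]
  have hbdd : BddBelow S := ⟨k₁, fun y hy => not_lt.1 fun hyk => by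
    have hy' : t ≤ cdf μ y := hy
    linarith [cdf_eq_zero_of_lt_of_measure_compl_Icc hμ hyk]⟩
  have hmem : t ≤ cdf μ (sInf S) := by
    refine ge_of_tendsto (((cdf μ).right_continuous _).mono Ioi_subset_Ici_self)
      (eventually_nhdsWithin_of_forall fun y hy => ?_)
    obtain ⟨s, hs, hsy⟩ := exists_lt_of_csInf_lt ⟨k₂, hk₂⟩ hy
    exact le_trans hs (monotone_cdf μ hsy.le)
  exact ⟨fun h => hmem.trans (monotone_cdf μ h), fun h => csInf_le hbdd h⟩

lemma quantile_mem_Icc (hμ : μ (Icc k₁ k₂)ᶜ = 0) {t : ℝ} (ht : 0 < t) (ht1 : t ≤ 1) :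
    quantile μ t ∈ Icc k₁ k₂ := by
  refine ⟨not_lt.1 fun hlt => ?_, (quantile_le_iff hμ ht ht1).2 ?_⟩
  · have h := (quantile_le_iff hμ ht ht1).1 le_rfl
    linarith [cdf_eq_zero_of_lt_of_measure_compl_Icc hμ hlt]
  · rwa [cdf_eq_one_of_measure_compl_Icc hμ]

lemma quantile_mono (hμ : μ (Icc k₁ k₂)ᶜ = 0) {s t : ℝ} (hs : 0 < s) (hst : s ≤ t)
    (ht1 : t ≤ 1) : quantile μ s ≤ quantile μ t :=
  (quantile_le_iff hμ hs (hst.trans ht1)).2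
    (hst.trans ((quantile_le_iff hμ (hs.trans_le hst) ht1).1 le_rfl))

end Quantile

/-- `quantile μ t` is a junk value for `t ≤ 0` (`sInf univ = 0`) and for `t > 1` (`sInf ∅ = 0`);
extending by `k₁` and by the value at `1` keeps it monotone with values in `[k₁, k₂]`. -/
noncomputable def extendedQuantile (μ : Measure ℝ) (k₁ t : ℝ) : ℝ :=
  if t ≤ 0 then k₁ else quantile μ (min t 1)

lemma extendedQuantile_of_mem_Ioc {μ : Measure ℝ} {k₁ t : ℝ} (ht : t ∈ Ioc 0 1) :
    extendedQuantile μ k₁ t = quantile μ t := by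
  rw [extendedQuantile, if_neg (not_le.2 ht.1), min_eq_left ht.2]

section ExtendedQuantile

variable {μ : Measure ℝ} [IsProbabilityMeasure μ] {k₁ k₂ : ℝ}

lemma extendedQuantile_mem_Icc (hμ : μ (Icc k₁ k₂)ᶜ = 0) (hk : k₁ ≤ k₂) (t : ℝ) :
    extendedQuantile μ k₁ t ∈ Icc k₁ k₂ := by
  unfold extendedQuantile
  split_ifs with ht
  · exact ⟨le_rfl, hk⟩
  · exact quantile_mem_Icc hμ (lt_min (not_le.1 ht) one_pos) (min_le_right _ _)

lemma monotone_extendedQuantile (hμ : μ (Icc k₁ k₂)ᶜ = 0) :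
    Monotone (extendedQuantile μ k₁) := by
  intro s t hst
  unfold extendedQuantile
  split_ifs with hs ht ht
  · exact le_rfl
  · exact (quantile_mem_Icc hμ (lt_min (not_le.1 ht) one_pos) (min_le_right _ _)).1
  · exact absurd (hst.trans ht) hs
  · exact quantile_mono hμ (lt_min (not_le.1 hs) one_pos) (min_le_min_right 1 hst)
      (min_le_right _ _)

lemma map_extendedQuantile (hμ : μ (Icc k₁ k₂)ᶜ = 0) :
    (volume.restrict (Ioc 0 1)).map (extendedQuantile μ k₁) = μ := by
  have hG := (monotone_extendedQuantile hμ).measurable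
  refine Measure.ext_of_Iic _ _ fun x => ?_
  rw [Measure.map_apply hG measurableSet_Iic, Measure.restrict_apply (hG measurableSet_Iic)]
  have hset : extendedQuantile μ k₁ ⁻¹' Iic x ∩ Ioc 0 1 = Ioc 0 (cdf μ x) := by
    ext t
    simp only [mem_inter_iff, mem_preimage, mem_Iic, mem_Ioc]
    constructor
    · rintro ⟨hGx, ht0, ht1⟩
      rw [extendedQuantile_of_mem_Ioc ⟨ht0, ht1⟩] at hGx
      exact ⟨ht0, (quantile_le_iff hμ ht0 ht1).1 hGx⟩
    · rintro ⟨ht0, htx⟩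
      have ht1 := htx.trans (cdf_le_one μ x)
      rw [extendedQuantile_of_mem_Ioc ⟨ht0, ht1⟩]
      exact ⟨(quantile_le_iff hμ ht0 ht1).2 htx, ht0, ht1⟩
  rw [hset, Real.volume_Ioc, sub_zero, ofReal_cdf]

lemma integral_eq_setIntegral_extendedQuantile (hμ : μ (Icc k₁ k₂)ᶜ = 0) {f : ℝ → ℝ}
    (hf : AEStronglyMeasurable f μ) :
    ∫ x, f x ∂μ = ∫ t in Ioc 0 1, f (extendedQuantile μ k₁ t) := by
  rw [← map_extendedQuantile hμ] at hf
  calc ∫ x, f x ∂μ = ∫ x, f x ∂(volume.restrict (Ioc 0 1)).map (extendedQuantile μ k₁) := by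
        rw [map_extendedQuantile hμ]
    _ = _ := integral_map (monotone_extendedQuantile hμ).measurable.aemeasurable hf

lemma setIntegral_comp_extendedQuantile_sub_le (hμ : μ (Icc k₁ k₂)ᶜ = 0) {φ : ℝ → ℝ}
    (hφ : LipschitzWith 1 φ) {n j : ℕ} (hj : j < n) :
    (∫ t in Ioc ((j : ℝ) / n) ((j + 1) / n), φ (extendedQuantile μ k₁ t)) -
        1 / n * φ (n * ∫ t in Ioc ((j : ℝ) / n) ((j + 1) / n), quantile μ t) ≤
      1 / n * (extendedQuantile μ k₁ ((j + 1) / n) - extendedQuantile μ k₁ (j / n)) := by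
  have hn : (0 : ℝ) < n := by exact_mod_cast j.zero_le.trans_lt hj
  have hlt : (j : ℝ) / n < (j + 1) / n := by gcongr; linarith
  have hlen : ((j : ℝ) + 1) / n - j / n = 1 / n := by ring
  have hblock : Ioc ((j : ℝ) / n) ((j + 1) / n) ⊆ Ioc 0 1 :=
    Ioc_subset_Ioc (by positivity) ((div_le_one hn).2 (by exact_mod_cast hj))
  have hbary : (n : ℝ) * ∫ t in Ioc ((j : ℝ) / n) ((j + 1) / n), quantile μ t =
      ⨍ t in Ioc ((j : ℝ) / n) ((j + 1) / n), extendedQuantile μ k₁ t := by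
    rw [setAverage_eq, Real.volume_real_Ioc_of_le hlt.le, hlen, one_div, inv_inv, smul_eq_mul]
    congr 1
    exact setIntegral_congr_fun measurableSet_Ioc fun t ht =>
      (extendedQuantile_of_mem_Ioc (hblock ht)).symm
  have h := (monotone_extendedQuantile hμ).setIntegral_lipschitz_comp_sub_le hφ hlt
  rwa [hlen, ← hbary] at h

end ExtendedQuantile

theorem fixedEqualMass_reconstruction_error_general (k₁ k₂ : ℝ) (hk : k₁ ≤ k₂)
    (μ : Measure ℝ) [IsProbabilityMeasure μ] (hμ : μ (Set.Icc k₁ k₂)ᶜ = 0)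
    (Mb : ℕ) (hMb : 0 < Mb) :
    W1 μ (∑ j ∈ Finset.range Mb, ENNReal.ofReal (1 / (Mb : ℝ)) •
      Measure.dirac
        ((Mb : ℝ) * ∫ t in Set.Ioc ((j : ℝ) / Mb) (((j : ℝ) + 1) / Mb), quantile μ t)) ≤
      (k₂ - k₁) / Mb := by
  set G := extendedQuantile μ k₁
  have hMb' : (0 : ℝ) < Mb := by exact_mod_cast hMb
  refine W1_le_of_forall_lipschitz (div_nonneg (sub_nonneg.2 hk) hMb'.le) fun φ hφ => ?_
  have hint : IntegrableOn (fun t => φ (G t)) (Ioc 0 1) :=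
    hφ.integrable_comp_of_ae_mem_Icc (monotone_extendedQuantile hμ).measurable.aestronglyMeasurable
      (ae_of_all _ (extendedQuantile_mem_Icc hμ hk))
  rw [integral_eq_setIntegral_extendedQuantile hμ hφ.continuous.aestronglyMeasurable,
    setIntegral_Ioc_zero_one_eq_sum hint hMb,
    integral_sum_smul_dirac _ fun _ _ => ENNReal.ofReal_ne_top, ← Finset.sum_sub_distrib]
  calc _ ≤ ∑ j ∈ Finset.range Mb, 1 / (Mb : ℝ) * (G ((j + 1) / Mb) - G (j / Mb)) :=
        Finset.sum_le_sum fun j hj => by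
          rw [ENNReal.toReal_ofReal (by positivity)]
          exact setIntegral_comp_extendedQuantile_sub_le hμ hφ (Finset.mem_range.1 hj)
    _ = 1 / Mb * (G 1 - G 0) := by
        rw [← Finset.mul_sum]
        congr 1
        simpa [div_self hMb'.ne'] using Finset.sum_range_sub (fun j : ℕ => G (j / Mb)) Mb
    _ ≤ (k₂ - k₁) / Mb := by
        rw [one_div_mul_eq_div]
        gcongr
        exacts [(extendedQuantile_mem_Icc hμ hk 1).2, (extendedQuantile_mem_Icc hμ hk 0).1]

/-- Fixed-equal-mass reconstruction error: for a purely atomic probability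
measure μ supported in K = [k₁,k₂], the reconstruction placing mass 1/M̄ at
the barycenter of each quantile block of mass 1/M̄ satisfies
W₁(μ, R_m(μ)) ≤ |K|/M̄. -/
theorem fixedEqualMass_reconstruction_error (k₁ k₂ : ℝ) (hk : k₁ ≤ k₂)
    (μ : Measure ℝ) [IsProbabilityMeasure μ] (hμ : μ (Set.Icc k₁ k₂)ᶜ = 0)
    (M : ℕ) (m : Fin M → ENNReal) (x : Fin M → ℝ)
    (hatom : μ = ∑ i, m i • Measure.dirac (x i))
    (Mb : ℕ) (hMb : 0 < Mb) :
    W1 μ (∑ j ∈ Finset.range Mb, ENNReal.ofReal (1 / (Mb : ℝ)) •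
      Measure.dirac
        ((Mb : ℝ) * ∫ t in Set.Ioc ((j : ℝ) / Mb) (((j : ℝ) + 1) / Mb), quantile μ t)) ≤
      (k₂ - k₁) / Mb :=
  fixedEqualMass_reconstruction_error_general k₁ k₂ hk μ hμ Mb hMb
end
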